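/- arXiv:2507.17237 — 2 statements merged into one kernel-verified Lean document; each statement's English description precedes it below -/
import Mathlib

section
/- The set of absolutely ν-Riemann-Lebesgue integrable functions g: S → X is a linear space, and the integral is linear: ∫(g₁+g₂)dν = ∫g₁dν + ∫g₂dν and ∫(c·g)dν = c·∫g dν for scalars c. -/
/-!
On a fixed partition with fixed tags, the Riemann sum of `g₁ + g₂` is the sum of the Riemann
sums and that of `c • g` is `c` times the Riemann sum of `g`, so both estimates transfer directly.
For the sum, the partitions supplied by the two hypotheses are replaced by their common
refinement, made of the pairwise intersections of their sets.
-/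

/-- Countable (ℕ-indexed) measurable partition of the whole space. -/
def IsCountablePartition {S : Type*} [MeasurableSpace S] (P : ℕ → Set S) : Prop :=
  (∀ n, MeasurableSet (P n)) ∧ Pairwise (Function.onFun Disjoint P) ∧ (⋃ n, P n) = Set.univ

/-- `Q` is finer than `P`: every set of `Q` is included in some set of `P`. -/
def Finer {S : Type*} (Q P : ℕ → Set S) : Prop := ∀ n, ∃ m, Q n ⊆ P m

/-- `a` is a value of the ν-Riemann–Lebesgue integral of `g` on `S`. -/
def IsRLIntegral {S : Type*} [MeasurableSpace S] {X : Type*} [NormedAddCommGroup X]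
    [NormedSpace ℝ X] (ν : Set S → ℝ) (g : S → X) (a : X) : Prop :=
  ∀ ε : ℝ, 0 < ε → ∃ P₀ : ℕ → Set S, IsCountablePartition P₀ ∧
    ∀ P : ℕ → Set S, IsCountablePartition P → Finer P P₀ →
      (∀ n, 0 < ν (P n) → ∃ M, ∀ x ∈ P n, ‖g x‖ ≤ M) ∧
      ∀ s : ℕ → S, (∀ n, (P n).Nonempty → s n ∈ P n) →
        Summable (fun n => ‖ν (P n) • g (s n)‖) ∧
        ‖(∑' n, ν (P n) • g (s n)) - a‖ < ε

section

variable {S : Type*}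

theorem Finer.trans {P Q R : ℕ → Set S} (hPQ : Finer P Q) (hQR : Finer Q R) : Finer P R := by
  intro n
  obtain ⟨m, hm⟩ := hPQ n
  obtain ⟨k, hk⟩ := hQR m
  exact ⟨k, hm.trans hk⟩

theorem IsCountablePartition.exists_common_refinement [MeasurableSpace S] {P₁ P₂ : ℕ → Set S}
    (h₁ : IsCountablePartition P₁) (h₂ : IsCountablePartition P₂) :
    ∃ P, IsCountablePartition P ∧ Finer P P₁ ∧ Finer P P₂ := by
  refine ⟨fun n => P₁ n.unpair.1 ∩ P₂ n.unpair.2, ⟨fun n => (h₁.1 _).inter (h₂.1 _), ?_, ?_⟩,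
    fun n => ⟨_, Set.inter_subset_left⟩, fun n => ⟨_, Set.inter_subset_right⟩⟩
  · intro n m hnm
    rcases not_and_or.1 (Prod.ext_iff.not.1 (Nat.pairEquiv.symm.injective.ne hnm)) with hne | hne
    · exact (h₁.2.1 hne).mono Set.inter_subset_left Set.inter_subset_left
    · exact (h₂.2.1 hne).mono Set.inter_subset_right Set.inter_subset_right
  · refine Set.iUnion_eq_univ_iff.2 fun x => ?_
    obtain ⟨i, hi⟩ := Set.iUnion_eq_univ_iff.1 h₁.2.2 x
    obtain ⟨j, hj⟩ := Set.iUnion_eq_univ_iff.1 h₂.2.2 x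
    exact ⟨Nat.pair i j, by simpa using ⟨hi, hj⟩⟩

variable {X : Type*} [NormedAddCommGroup X] [NormedSpace ℝ X]

/-- The condition that `IsRLIntegral ν g a` imposes, for the tolerance `ε`, on every partition
finer than the one it provides. -/
def IsRLApprox (ν : Set S → ℝ) (g : S → X) (a : X) (ε : ℝ) (P : ℕ → Set S) : Prop :=
  (∀ n, 0 < ν (P n) → ∃ M, ∀ x ∈ P n, ‖g x‖ ≤ M) ∧
    ∀ s : ℕ → S, (∀ n, (P n).Nonempty → s n ∈ P n) →
      Summable (fun n => ‖ν (P n) • g (s n)‖) ∧ ‖(∑' n, ν (P n) • g (s n)) - a‖ < ε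

variable {ν : Set S → ℝ}

theorem IsRLApprox.add [CompleteSpace X] {P : ℕ → Set S} {g₁ g₂ : S → X} {a₁ a₂ : X} {ε₁ ε₂ : ℝ}
    (h₁ : IsRLApprox ν g₁ a₁ ε₁ P) (h₂ : IsRLApprox ν g₂ a₂ ε₂ P) :
    IsRLApprox ν (g₁ + g₂) (a₁ + a₂) (ε₁ + ε₂) P := by
  refine ⟨fun n hn => ?_, fun s hs => ?_⟩
  · obtain ⟨M₁, hM₁⟩ := h₁.1 n hn
    obtain ⟨M₂, hM₂⟩ := h₂.1 n hn
    exact ⟨M₁ + M₂, fun x hx => (norm_add_le _ _).trans (add_le_add (hM₁ x hx) (hM₂ x hx))⟩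
  obtain ⟨hsum₁, hclose₁⟩ := h₁.2 s hs
  obtain ⟨hsum₂, hclose₂⟩ := h₂.2 s hs
  simp only [Pi.add_apply, smul_add]
  refine ⟨(hsum₁.add hsum₂).of_nonneg_of_le (fun _ => norm_nonneg _) fun _ => norm_add_le _ _, ?_⟩
  rw [hsum₁.of_norm.tsum_add hsum₂.of_norm, add_sub_add_comm]
  exact (norm_add_le _ _).trans_lt (add_lt_add hclose₁ hclose₂)

theorem IsRLApprox.const_smul {P : ℕ → Set S} {g : S → X} {a : X} {ε ε' : ℝ}
    (h : IsRLApprox ν g a ε P) (c : ℝ) (hε : |c| * ε < ε') : IsRLApprox ν (c • g) (c • a) ε' P := by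
  refine ⟨fun n hn => ?_, fun s hs => ?_⟩
  · obtain ⟨M, hM⟩ := h.1 n hn
    refine ⟨|c| * M, fun x hx => ?_⟩
    rw [Pi.smul_apply, norm_smul, Real.norm_eq_abs]
    exact mul_le_mul_of_nonneg_left (hM x hx) (abs_nonneg c)
  obtain ⟨hsum, hclose⟩ := h.2 s hs
  have hnorm : ∀ n, ‖ν (P n) • (c • g) (s n)‖ = |c| * ‖ν (P n) • g (s n)‖ := fun n => by
    rw [Pi.smul_apply, smul_comm, norm_smul, Real.norm_eq_abs]
  refine ⟨by simpa only [hnorm] using hsum.mul_left |c|, ?_⟩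
  simp only [Pi.smul_apply, smul_comm (ν _) c]
  rw [tsum_const_smul'', ← smul_sub, norm_smul, Real.norm_eq_abs]
  exact (mul_le_mul_of_nonneg_left hclose.le (abs_nonneg c)).trans_lt hε

theorem IsRLIntegral.add [MeasurableSpace S] [CompleteSpace X] {g₁ g₂ : S → X} {a₁ a₂ : X}
    (h₁ : IsRLIntegral ν g₁ a₁) (h₂ : IsRLIntegral ν g₂ a₂) :
    IsRLIntegral ν (g₁ + g₂) (a₁ + a₂) := by
  intro ε hε
  obtain ⟨Q₁, hQ₁, happrox₁⟩ := h₁ (ε / 2) (half_pos hε)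
  obtain ⟨Q₂, hQ₂, happrox₂⟩ := h₂ (ε / 2) (half_pos hε)
  obtain ⟨P₀, hP₀, hP₀Q₁, hP₀Q₂⟩ := hQ₁.exists_common_refinement hQ₂
  refine ⟨P₀, hP₀, fun P hP hPP₀ => ?_⟩
  have := IsRLApprox.add (happrox₁ P hP (hPP₀.trans hP₀Q₁)) (happrox₂ P hP (hPP₀.trans hP₀Q₂))
  rwa [add_halves] at this

theorem IsRLIntegral.const_smul [MeasurableSpace S] {g : S → X} {a : X}
    (h : IsRLIntegral ν g a) (c : ℝ) : IsRLIntegral ν (c • g) (c • a) := by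
  intro ε hε
  have hc : 0 < |c| + 1 := by positivity
  obtain ⟨P₀, hP₀, happrox⟩ := h (ε / (|c| + 1)) (div_pos hε hc)
  refine ⟨P₀, hP₀, fun P hP hPP₀ => IsRLApprox.const_smul (happrox P hP hPP₀) c ?_⟩
  rw [← mul_div_assoc, div_lt_iff₀ hc]
  nlinarith [abs_nonneg c]

end

theorem rl_integral_linear_general {S : Type*} [MeasurableSpace S]
    {X : Type*} [NormedAddCommGroup X] [NormedSpace ℝ X] [CompleteSpace X]
    (ν : Set S → ℝ)
    (g₁ g₂ : S → X) (a₁ a₂ : X) (c : ℝ)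
    (h₁ : IsRLIntegral ν g₁ a₁) (h₂ : IsRLIntegral ν g₂ a₂) :
    IsRLIntegral ν (fun s => g₁ s + g₂ s) (a₁ + a₂) ∧
    IsRLIntegral ν (fun s => c • g₁ s) (c • a₁) :=
  ⟨h₁.add h₂, h₁.const_smul c⟩

/-- The absolutely ν-Riemann–Lebesgue integrable functions form a linear space and
the integral is linear. -/
theorem rl_integral_linear {S : Type*} [MeasurableSpace S] [Nonempty S]
    {X : Type*} [NormedAddCommGroup X] [NormedSpace ℝ X] [CompleteSpace X]
    (ν : Set S → ℝ) (hν0 : ν ∅ = 0) (hνnn : ∀ A, 0 ≤ ν A)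
    (g₁ g₂ : S → X) (a₁ a₂ : X) (c : ℝ)
    (h₁ : IsRLIntegral ν g₁ a₁) (h₂ : IsRLIntegral ν g₂ a₂) :
    IsRLIntegral ν (fun s => g₁ s + g₂ s) (a₁ + a₂) ∧
    IsRLIntegral ν (fun s => c • g₁ s) (c • a₁) :=
  rl_integral_linear_general ν g₁ g₂ a₁ a₂ c h₁ h₂
end

section
/- Let μ be a fuzzy measure (monotone, μ(∅)=0) with μ(S) < ∞, ν of finite variation with ν({0})=0. If f: S → [0,∞) is μ-measurable and f = 0 μ-almost everywhere (there exists E ∈ C with μ(E)=0 and f=0 on S∖E), then f is (ν,μ)-integrable on S and ∫*_S f d(ν,μ) = 0. -/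
/-- The set of finite sums `Σ ν(Bᵢ)` over finite pairwise disjoint measurable families
of subsets of `B`. -/
def variationSet {S : Type*} [MeasurableSpace S] (ν : Set S → ℝ) (B : Set S) : Set ℝ :=
  {x | ∃ (n : ℕ) (C : Fin n → Set S), (∀ i, MeasurableSet (C i)) ∧ (∀ i, C i ⊆ B) ∧
    Pairwise (Function.onFun Disjoint C) ∧ x = ∑ i, ν (C i)}

/-- `u_{f,μ}^A(α) = μ({s ∈ A : f s ≥ α})`, as a function on `[0,∞) ≃ ℝ≥0`. -/
def uFn {S : Type*} (μ : Set S → ℝ) (f : S → ℝ) (A : Set S) : NNReal → ℝ :=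
  fun α => μ {s | s ∈ A ∧ (α : ℝ) ≤ f s}

/-- `f` is `(ν,μ)`-integrable on `A` with generalized decomposition integral `c`:
`u_{f,μ}^A` is ν-Riemann–Lebesgue integrable on `[0,∞)` with value `c`. -/
def GRLIntegralOn {S : Type*} [MeasurableSpace S] (ν : Set NNReal → ℝ) (μ : Set S → ℝ)
    (f : S → ℝ) (A : Set S) (c : ℝ) : Prop :=
  IsRLIntegral ν (uFn μ f A) c

def partitionOfSet {S : Type*} (N : Set S) : ℕ → Set S :=
  fun n => if n = 0 then N else if n = 1 then Nᶜ else ∅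

lemma isCountablePartition_partitionOfSet {S : Type*} [MeasurableSpace S] {N : Set S}
    (hN : MeasurableSet N) : IsCountablePartition (partitionOfSet N) := by
  refine ⟨fun n => ?_, fun n m hnm => ?_, ?_⟩
  · unfold partitionOfSet
    split_ifs
    exacts [hN, hN.compl, .empty]
  · simp only [Function.onFun, partitionOfSet]
    split_ifs <;> first
      | omega
      | exact disjoint_compl_right
      | exact disjoint_compl_left
      | exact disjoint_bot_left
      | exact disjoint_bot_right
  · refine Set.eq_univ_of_forall fun x => Set.mem_iUnion.2 ?_
    by_cases hx : x ∈ N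
    · exact ⟨0, by simpa [partitionOfSet] using hx⟩
    · exact ⟨1, by simpa [partitionOfSet] using hx⟩

lemma subset_or_subset_compl_of_finer_partitionOfSet {S : Type*} {N : Set S}
    {P : ℕ → Set S} (hP : Finer P (partitionOfSet N)) (n : ℕ) : P n ⊆ N ∨ P n ⊆ Nᶜ := by
  obtain ⟨m, hm⟩ := hP n
  unfold partitionOfSet at hm
  split_ifs at hm
  · exact .inl hm
  · exact .inr hm
  · exact .inl (hm.trans (Set.empty_subset N))

theorem isRLIntegral_zero_of_eqOn_compl {S : Type*} [MeasurableSpace S] {X : Type*}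
    [NormedAddCommGroup X] [NormedSpace ℝ X] {ν : Set S → ℝ} {g : S → X} {N : Set S}
    (hN : MeasurableSet N) (hνN : ∀ A ⊆ N, ν A = 0) (hg : Set.EqOn g 0 Nᶜ) :
    IsRLIntegral ν g 0 := by
  intro ε hε
  refine ⟨partitionOfSet N, isCountablePartition_partitionOfSet hN, fun P _ hfin => ?_⟩
  have hsplit := subset_or_subset_compl_of_finer_partitionOfSet hfin
  refine ⟨fun n hpos => ⟨0, fun x hx => ?_⟩, fun s hs => ?_⟩
  · rcases hsplit n with hPN | hPN
    · exact absurd (hνN _ hPN) hpos.ne'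
    · simp [hg (hPN hx)]
  · have hterm : ∀ n, ν (P n) • g (s n) = 0 := fun n => by
      rcases hsplit n with hPN | hPN
      · rw [hνN _ hPN, zero_smul]
      · rcases (P n).eq_empty_or_nonempty with hempty | hne
        · rw [hempty, hνN _ (Set.empty_subset N), zero_smul]
        · rw [hg (hPN (hs n hne)), Pi.zero_apply, smul_zero]
    simpa only [hterm, norm_zero, tsum_zero, sub_zero] using ⟨summable_zero, hε⟩

lemma uFn_eq_zero_of_ne_zero {S : Type*} {μ : Set S → ℝ} (hμnn : ∀ A, 0 ≤ μ A)
    (hμmono : ∀ A B : Set S, A ⊆ B → μ A ≤ μ B) {f : S → ℝ} {E : Set S} (hE0 : μ E = 0)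
    (hEf : ∀ s ∉ E, f s = 0) (A : Set S) {α : NNReal} (hα : α ≠ 0) : uFn μ f A α = 0 := by
  have hsub : {s | s ∈ A ∧ (α : ℝ) ≤ f s} ⊆ E := fun s hs => by
    by_contra hsE
    have : (0 : ℝ) < α := by positivity
    linarith [hs.2, hEf s hsE]
  exact le_antisymm (hE0 ▸ hμmono _ _ hsub) (hμnn _)

theorem grl_zero_ae_general {S : Type*} [MeasurableSpace S]
    (μ : Set S → ℝ) (hμnn : ∀ A, 0 ≤ μ A)
    (hμmono : ∀ A B : Set S, A ⊆ B → μ A ≤ μ B)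
    (ν : Set NNReal → ℝ) (hν0 : ν ∅ = 0)
    (hνzero : ν {0} = 0)
    (f : S → ℝ)
    (hae : ∃ E : Set S, MeasurableSet E ∧ μ E = 0 ∧ ∀ s ∉ E, f s = 0) :
    GRLIntegralOn ν μ f Set.univ 0 := by
  obtain ⟨E, -, hE0, hEf⟩ := hae
  refine isRLIntegral_zero_of_eqOn_compl (measurableSet_singleton 0) (fun A hA => ?_)
    fun α hα => uFn_eq_zero_of_ne_zero hμnn hμmono hE0 hEf _ hα
  rcases Set.subset_singleton_iff_eq.1 hA with rfl | rfl
  exacts [hν0, hνzero]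

/-- If `μ` is a fuzzy measure, `ν` has finite variation with `ν({0}) = 0`, and `f = 0`
μ-a.e., then `f` is `(ν,μ)`-integrable on `S` with integral `0`. -/
theorem grl_zero_ae {S : Type*} [MeasurableSpace S]
    (μ : Set S → ℝ) (hμ0 : μ ∅ = 0) (hμnn : ∀ A, 0 ≤ μ A)
    (hμmono : ∀ A B : Set S, A ⊆ B → μ A ≤ μ B)
    (ν : Set NNReal → ℝ) (hν0 : ν ∅ = 0) (hνnn : ∀ E, 0 ≤ ν E)
    (hνzero : ν {0} = 0) (hvar : BddAbove (variationSet ν Set.univ))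
    (f : S → ℝ) (hf : Measurable f) (hfnn : ∀ s, 0 ≤ f s)
    (hae : ∃ E : Set S, MeasurableSet E ∧ μ E = 0 ∧ ∀ s ∉ E, f s = 0) :
    GRLIntegralOn ν μ f Set.univ 0 :=
  grl_zero_ae_general μ hμnn hμmono ν hν0 hνzero f hae
end
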